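/- arXiv:0710.3637 — 2 statements merged into one kernel-verified Lean document; each statement's English description precedes it below -/
import Mathlib

section
/- (Lemma 5.1 and Remark 5.2) There exist constants d > 1 and b > 0 depending only on n such that the following holds. Let Ω ⊂ ℝⁿ be a bounded convex domain with B(0, n^{−3/2}) ⊂ Ω ⊂ B(0,1), and let u be a smooth strictly convex function on the closure of Ω with inf_Ω u = 0 attained at an interior point and u ≡ 1 on ∂Ω. Then, with f(ξ) := ⟨ξ, ∇u(ξ)⟩ − u(ξ), one has Σ_i (∂u/∂ξ_i)²(ξ) ≤ b (d + f(ξ))² for all ξ in the closure of Ω, and moreover |u(ξ) + f(ξ)| ≤ d + f(ξ) for all such ξ. -/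
noncomputable section

/-- The `i`-th partial derivative of a function on Euclidean `ℝⁿ`. -/
def pd {n : ℕ} (i : Fin n) (f : EuclideanSpace ℝ (Fin n) → ℝ) :
    EuclideanSpace ℝ (Fin n) → ℝ :=
  fun x => fderiv ℝ f x (EuclideanSpace.single i 1)

/-- The Hessian matrix `(∂²f/∂x_i∂x_j)`. -/
def hess {n : ℕ} (f : EuclideanSpace ℝ (Fin n) → ℝ) (x : EuclideanSpace ℝ (Fin n)) :
    Matrix (Fin n) (Fin n) ℝ :=
  Matrix.of fun i j => pd i (pd j f) x

/-- The Legendre transform function `f(ξ) = ⟨ξ, ∇u(ξ)⟩ − u(ξ)`. -/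
def legendreF {n : ℕ} (u : EuclideanSpace ℝ (Fin n) → ℝ)
    (ξ : EuclideanSpace ℝ (Fin n)) : ℝ :=
  (∑ i : Fin n, ξ i * pd i u ξ) - u ξ

/-!
Positivity of the Hessian makes `u` convex on `Ω`, and by continuity on `closure Ω`. Every
point of `closure Ω` lies on a segment joining two boundary points, so `u ≤ 1` there.
Since `Du(ξ) ξ = u(ξ) + f(ξ)`, the supporting hyperplane at `ξ` reads
`u(η) ≥ Du(ξ) η - f(ξ)`; testing it on the closed ball of radius `r = n^{-3/2}` against `u ≤ 1`
gives `r ‖Du(ξ)‖ ≤ 1 + f(ξ)`. This bounds the gradient by `(1 + f)/r` and yields `f ≥ -1`,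
which together with `0 ≤ u ≤ 1` gives both estimates with `d = 2` and `b = r⁻²`.
-/
open Set Metric Matrix

theorem IsPreconnected.inter_frontier_nonempty {X : Type*} [TopologicalSpace X] {s t : Set X}
    (hs : IsPreconnected s) (hst : (s ∩ t).Nonempty) (hst' : (s \ t).Nonempty) :
    (s ∩ frontier t).Nonempty := by
  by_contra h
  have hcover : s ⊆ interior t ∪ interior tᶜ := by
    intro x hx
    by_cases hxt : x ∈ interior t
    · exact Or.inl hxt
    · refine Or.inr ?_
      rw [interior_compl]
      exact fun hcl => h ⟨x, hx, hcl, hxt⟩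
  rcases hs.subset_or_subset isOpen_interior isOpen_interior
      (disjoint_compl_right.mono interior_subset interior_subset) hcover with hsub | hsub
  · obtain ⟨x, hxs, hxt⟩ := hst'
    exact hxt (interior_subset (hsub hxs))
  · obtain ⟨x, hxs, hxt⟩ := hst
    exact interior_subset (hsub hxs) hxt

theorem ConvexOn.of_convexOn_lineMap {E : Type*} [AddCommGroup E] [Module ℝ E] {s : Set E}
    {f : E → ℝ} (hs : Convex ℝ s)
    (h : ∀ x ∈ s, ∀ y ∈ s, ConvexOn ℝ (Icc (0 : ℝ) 1) (f ∘ AffineMap.lineMap x y)) :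
    ConvexOn ℝ s f := by
  refine ⟨hs, fun x hx y hy a b ha hb hab => ?_⟩
  have := (h x hx y hy).2 (left_mem_Icc.mpr zero_le_one) (right_mem_Icc.mpr zero_le_one)
    ha hb hab
  obtain rfl : a = 1 - b := eq_sub_of_add_eq hab
  simpa [AffineMap.lineMap_apply_module] using this

section NormedSpace

variable {E : Type*} [NormedAddCommGroup E] [NormedSpace ℝ E]

theorem Bornology.IsBounded.exists_nonneg_add_smul_mem_frontier {s : Set E}
    (hs : Bornology.IsBounded s) {x : E} (hx : x ∈ s) {w : E} (hw : w ≠ 0) :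
    ∃ t : ℝ, 0 ≤ t ∧ x + t • w ∈ frontier s := by
  obtain ⟨C, hC⟩ := hs.exists_norm_le
  have hray : IsPreconnected ((fun t : ℝ => x + t • w) '' Ici 0) :=
    isPreconnected_Ici.image _ (by fun_prop)
  have hw' : 0 < ‖w‖ := norm_pos_iff.mpr hw
  set T := (C + ‖x‖ + 1) / ‖w‖
  have hT : 0 ≤ T := by
    have := (norm_nonneg x).trans (hC x hx)
    positivity
  have hfar : x + T • w ∉ s := fun hmem => by
    have h1 := hC _ hmem
    have h2 : ‖T • w‖ ≤ ‖x + T • w‖ + ‖x‖ := by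
      simpa using norm_sub_le (x + T • w) x
    rw [norm_smul, Real.norm_of_nonneg hT, div_mul_cancel₀ _ hw'.ne'] at h2
    linarith
  obtain ⟨_, ⟨t, ht, rfl⟩, hfr⟩ := hray.inter_frontier_nonempty
    ⟨x, ⟨0, self_mem_Ici, by simp⟩, hx⟩ ⟨x + T • w, ⟨T, hT, rfl⟩, hfar⟩
  exact ⟨t, ht, hfr⟩

theorem ConvexOn.closure_of_continuousOn {s : Set E} {f : E → ℝ} (hf : ConvexOn ℝ s f)
    (hc : ContinuousOn f (closure s)) : ConvexOn ℝ (closure s) f := by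
  refine ⟨hf.1.closure, fun x hx y hy a b ha hb hab => ?_⟩
  have hxy : (x, y) ∈ closure (s ×ˢ s) := by rw [closure_prod_eq]; exact ⟨hx, hy⟩
  have hmaps : MapsTo (fun p : E × E => a • p.1 + b • p.2) (s ×ˢ s) (closure s) :=
    fun p hp => subset_closure (hf.1 hp.1 hp.2 ha hb hab)
  refine ContinuousWithinAt.closure_le (f := fun p : E × E => f (a • p.1 + b • p.2))
    (g := fun p => a • f p.1 + b • f p.2) hxy ?_ ?_ fun p hp => hf.2 hp.1 hp.2 ha hb hab
  · exact (hc _ (hf.1.closure hx hy ha hb hab)).comp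
      (f := fun p : E × E => a • p.1 + b • p.2) (by fun_prop) hmaps
  · have hfst : ContinuousWithinAt (fun p : E × E => f p.1) (s ×ˢ s) (x, y) :=
      (hc x hx).comp continuousWithinAt_fst fun p hp => subset_closure hp.1
    have hsnd : ContinuousWithinAt (fun p : E × E => f p.2) (s ×ˢ s) (x, y) :=
      (hc y hy).comp continuousWithinAt_snd fun p hp => subset_closure hp.2
    exact (hfst.const_smul a).add (hsnd.const_smul b)

theorem ConvexOn.le_of_forall_frontier_le [Nontrivial E] {s : Set E} {f : E → ℝ} {M : ℝ}
    (hs : Bornology.IsBounded s) (hf : ConvexOn ℝ (closure s) f)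
    (hM : ∀ x ∈ frontier s, f x ≤ M) {x : E} (hx : x ∈ closure s) : f x ≤ M := by
  obtain ⟨w, hw⟩ := exists_ne (0 : E)
  obtain ⟨t, ht, hfrt⟩ := hs.closure.exists_nonneg_add_smul_mem_frontier hx hw
  obtain ⟨t', ht', hfrt'⟩ :=
    hs.closure.exists_nonneg_add_smul_mem_frontier hx (neg_ne_zero.mpr hw)
  replace hfrt := frontier_closure_subset hfrt
  replace hfrt' := frontier_closure_subset hfrt'
  have hseg : x ∈ segment ℝ (x + t • w) (x + t' • -w) := by
    rw [mem_segment_iff_sameRay, show x - (x + t • w) = t • -w by module, add_sub_cancel_left]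
    exact (SameRay.sameRay_nonneg_smul_left _ ht).nonneg_smul_right ht'
  calc f x ≤ max (f (x + t • w)) (f (x + t' • -w)) :=
        hf.le_on_segment (frontier_subset_closure hfrt) (frontier_subset_closure hfrt') hseg
    _ ≤ M := max_le (hM _ hfrt) (hM _ hfrt')

theorem ConvexOn.add_apply_sub_le_of_hasFDerivAt {s : Set E} {f : E → ℝ} {f' : E →L[ℝ] ℝ}
    {x y : E} (hf : ConvexOn ℝ s f) (hx : x ∈ s) (hy : y ∈ s) (hf' : HasFDerivAt f f' x) :
    f x + f' (y - x) ≤ f y := by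
  have hline : ConvexOn ℝ (Icc (0 : ℝ) 1) (f ∘ AffineMap.lineMap x y) :=
    (hf.comp_affineMap _).subset (fun t ht => hf.1.lineMap_mem hx hy ht) (convex_Icc 0 1)
  have hderiv : HasDerivAt (f ∘ AffineMap.lineMap x y) (f' (y - x)) (0 : ℝ) :=
    hf'.comp_hasDerivAt_of_eq 0 AffineMap.hasDerivAt_lineMap (AffineMap.lineMap_apply_zero x y).symm
  have := hline.le_slope_of_hasDerivAt (left_mem_Icc.mpr zero_le_one)
    (right_mem_Icc.mpr zero_le_one) zero_lt_one hderiv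
  simp only [slope, Function.comp_apply, AffineMap.lineMap_apply_one,
    AffineMap.lineMap_apply_zero, sub_zero, inv_one, one_smul, vsub_eq_sub] at this
  linarith

theorem ConvexOn.mul_norm_fderiv_le {s : Set E} {f : E → ℝ} {x : E} {r M : ℝ}
    (hf : ConvexOn ℝ s f) (hx : x ∈ s) (hr : 0 < r) (hball : closedBall 0 r ⊆ s)
    (hM : ∀ y ∈ s, f y ≤ M) : r * ‖fderiv ℝ f x‖ ≤ M - f x + fderiv ℝ f x x := by
  by_cases hd : DifferentiableAt ℝ f x
  · set L := fderiv ℝ f x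
    have hsupport : ∀ y ∈ closedBall (0 : E) r, L y ≤ M - f x + L x := fun y hy => by
      have := hf.add_apply_sub_le_of_hasFDerivAt hx (hball hy) hd.hasFDerivAt
      rw [map_sub] at this
      linarith [hM y (hball hy)]
    have hL : ‖L‖ ≤ (M - f x + L x) / r := by
      refine L.opNorm_bound_of_ball_bound hr _ fun y hy => abs_le.mpr ⟨?_, hsupport y hy⟩
      have := hsupport (-y) (by simpa using hy)
      rw [map_neg] at this
      linarith
    rwa [le_div_iff₀ hr, mul_comm] at hL
  · rw [fderiv_zero_of_not_differentiableAt hd]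
    simpa using hM x hx

end NormedSpace

section Euclidean

variable {ι : Type*} [Fintype ι] [DecidableEq ι]

theorem ContinuousLinearMap.apply_eq_sum_smul_apply_single {F : Type*} [NormedAddCommGroup F]
    [NormedSpace ℝ F] (L : EuclideanSpace ℝ ι →L[ℝ] F) (w : EuclideanSpace ℝ ι) :
    L w = ∑ i, w i • L (EuclideanSpace.single i 1) := by
  conv_lhs => rw [← (EuclideanSpace.basisFun ι ℝ).sum_repr w]
  simp [map_sum]

theorem ContinuousLinearMap.sum_sq_apply_single_eq_norm_sq
    (L : EuclideanSpace ℝ ι →L[ℝ] ℝ) :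
    ∑ i, L (EuclideanSpace.single i 1) ^ 2 = ‖L‖ ^ 2 := by
  set v := (InnerProductSpace.toDual ℝ (EuclideanSpace ℝ ι)).symm L
  have hv : ∀ i, L (EuclideanSpace.single i 1) = v i := fun i => by
    rw [← InnerProductSpace.toDual_symm_apply, EuclideanSpace.inner_single_right]
    simp [v]
  rw [← (InnerProductSpace.toDual ℝ (EuclideanSpace ℝ ι)).symm.norm_map L,
    EuclideanSpace.norm_sq_eq]
  simp [hv, v]

end Euclidean

section Hessian

variable {n : ℕ}

theorem legendreF_eq_fderiv_sub (u : EuclideanSpace ℝ (Fin n) → ℝ)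
    (ξ : EuclideanSpace ℝ (Fin n)) :
    legendreF u ξ = fderiv ℝ u ξ ξ - u ξ := by
  rw [legendreF, (fderiv ℝ u ξ).apply_eq_sum_smul_apply_single ξ]
  rfl

theorem hess_apply_eq_fderiv_fderiv {u : EuclideanSpace ℝ (Fin n) → ℝ}
    {x : EuclideanSpace ℝ (Fin n)} (hu : DifferentiableAt ℝ (fderiv ℝ u) x) (i j : Fin n) :
    hess u x i j =
      fderiv ℝ (fderiv ℝ u) x (EuclideanSpace.single i 1) (EuclideanSpace.single j 1) := by
  change fderiv ℝ (fun y => fderiv ℝ u y (EuclideanSpace.single j 1)) x _ = _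
  rw [fderiv_clm_apply hu (differentiableAt_const _)]
  simp

theorem fderiv_fderiv_apply_eq_dotProduct_hess {u : EuclideanSpace ℝ (Fin n) → ℝ}
    {x : EuclideanSpace ℝ (Fin n)} (hu : DifferentiableAt ℝ (fderiv ℝ u) x)
    (w : EuclideanSpace ℝ (Fin n)) :
    fderiv ℝ (fderiv ℝ u) x w w = WithLp.ofLp w ⬝ᵥ (hess u x *ᵥ WithLp.ofLp w) := by
  rw [ContinuousLinearMap.apply_eq_sum_smul_apply_single (fderiv ℝ (fderiv ℝ u) x)]
  simp only [_root_.sum_apply, _root_.smul_apply]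
  simp_rw [ContinuousLinearMap.apply_eq_sum_smul_apply_single
    (fderiv ℝ (fderiv ℝ u) x (EuclideanSpace.single _ 1)) w, ← hess_apply_eq_fderiv_fderiv hu]
  simp [dotProduct, mulVec, Finset.mul_sum, mul_comm]

theorem convexOn_of_hess_posSemidef {Ω : Set (EuclideanSpace ℝ (Fin n))} (hΩ : IsOpen Ω)
    (hconv : Convex ℝ Ω) {u : EuclideanSpace ℝ (Fin n) → ℝ} (hu : ContDiffOn ℝ 2 u Ω)
    (hpsd : ∀ x ∈ Ω, (hess u x).PosSemidef) : ConvexOn ℝ Ω u := by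
  have hdiff : ∀ z ∈ Ω, DifferentiableAt ℝ u z ∧ DifferentiableAt ℝ (fderiv ℝ u) z :=
    fun z hz => by
      have h := hu.contDiffAt (hΩ.mem_nhds hz)
      exact ⟨h.differentiableAt (by norm_num),
        (h.fderiv_right (m := 1) (by norm_num)).differentiableAt (by norm_num)⟩
  refine ConvexOn.of_convexOn_lineMap hconv fun x hx y hy => ?_
  set γ := AffineMap.lineMap (k := ℝ) x y
  have hγ : ∀ t ∈ Icc (0 : ℝ) 1, γ t ∈ Ω := fun t ht => hconv.lineMap_mem hx hy ht
  have hd1 : ∀ t ∈ Icc (0 : ℝ) 1,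
      HasDerivAt (u ∘ γ) (fderiv ℝ u (γ t) (y - x)) t := fun t ht =>
    (hdiff _ (hγ t ht)).1.hasFDerivAt.comp_hasDerivAt t AffineMap.hasDerivAt_lineMap
  have hd2 : ∀ t ∈ Icc (0 : ℝ) 1, HasDerivAt (fun t => fderiv ℝ u (γ t) (y - x))
      (fderiv ℝ (fderiv ℝ u) (γ t) (y - x) (y - x)) t := fun t ht => by
    simpa using ((hdiff _ (hγ t ht)).2.hasFDerivAt.comp_hasDerivAt t
      AffineMap.hasDerivAt_lineMap).clm_apply (hasDerivAt_const t (y - x))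
  refine convexOn_of_hasDerivWithinAt2_nonneg (convex_Icc 0 1)
    (fun t ht => (hd1 t ht).continuousAt.continuousWithinAt)
    (fun t ht => (hd1 t (interior_subset ht)).hasDerivWithinAt)
    (fun t ht => (hd2 t (interior_subset ht)).hasDerivWithinAt) fun t ht => ?_
  rw [fderiv_fderiv_apply_eq_dotProduct_hess (hdiff _ (hγ t (interior_subset ht))).2]
  simpa using (hpsd _ (hγ t (interior_subset ht))).dotProduct_mulVec_nonneg (WithLp.ofLp (y - x))

end Hessian

/-- Lemma 5.1 and Remark 5.2: there are constants `d > 1`, `b > 0` depending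
only on `n` such that for every normalized convex domain
`B(0, n^{−3/2}) ⊂ Ω ⊂ B(0,1)` and every smooth strictly convex `u` on the
closure of `Ω`, normalized so that `inf_Ω u = 0` is attained in `Ω` and
`u = 1` on `∂Ω`, one has `Σ (∂u/∂ξ_i)² ≤ b(d+f)²` and `|u+f| ≤ d+f` on
the closure of `Ω`, where `f` is the Legendre transform function of `u`. -/
theorem gradient_estimate_normalized (n : ℕ) (hn : 1 ≤ n) :
    ∃ d : ℝ, 1 < d ∧ ∃ b : ℝ, 0 < b ∧
      ∀ (Ω : Set (EuclideanSpace ℝ (Fin n))), IsOpen Ω → Convex ℝ Ω →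
        Metric.ball (0 : EuclideanSpace ℝ (Fin n)) ((n : ℝ) ^ (-(3 : ℝ) / 2)) ⊆ Ω →
        Ω ⊆ Metric.ball (0 : EuclideanSpace ℝ (Fin n)) 1 →
        ∀ (u : EuclideanSpace ℝ (Fin n) → ℝ),
          ContDiffOn ℝ (⊤ : ℕ∞) u (closure Ω) →
          (∀ ξ ∈ closure Ω, (hess u ξ).PosDef) →
          (∀ ξ ∈ Ω, 0 ≤ u ξ) → (∃ p ∈ Ω, u p = 0) →
          (∀ ξ ∈ frontier Ω, u ξ = 1) →
          ∀ ξ ∈ closure Ω,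
            (∑ i : Fin n, (pd i u ξ) ^ 2) ≤ b * (d + legendreF u ξ) ^ 2 ∧
              |u ξ + legendreF u ξ| ≤ d + legendreF u ξ := by
  have : Nonempty (Fin n) := ⟨⟨0, hn⟩⟩
  set r : ℝ := (n : ℝ) ^ (-(3 : ℝ) / 2)
  have hr : 0 < r := Real.rpow_pos_of_pos (by exact_mod_cast hn) _
  refine ⟨2, one_lt_two, r⁻¹ ^ 2, by positivity, ?_⟩
  intro Ω hΩ hconv hball hbdd u hu hpd hnonneg _ hbv ξ hξ
  have hconvex : ConvexOn ℝ (closure Ω) u :=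
    (convexOn_of_hess_posSemidef hΩ hconv ((hu.of_le (WithTop.coe_le_coe.mpr le_top)).mono
      subset_closure) fun x hx => (hpd x (subset_closure hx)).posSemidef).closure_of_continuousOn
      hu.continuousOn
  have hle_one : ∀ x ∈ closure Ω, u x ≤ 1 := fun x hx =>
    hconvex.le_of_forall_frontier_le (isBounded_ball.subset hbdd) (fun y hy => (hbv y hy).le) hx
  have hnonneg_ξ : 0 ≤ u ξ := ContinuousWithinAt.closure_le hξ continuousWithinAt_const
    ((hu.continuousOn ξ hξ).mono subset_closure) hnonneg
  have hgrad := hconvex.mul_norm_fderiv_le hξ hr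
    ((closure_ball 0 hr.ne').symm.subset.trans (closure_mono hball)) hle_one
  have hnorm_nonneg : 0 ≤ r * ‖fderiv ℝ u ξ‖ := by positivity
  rw [legendreF_eq_fderiv_sub, show ∑ i, pd i u ξ ^ 2 = ‖fderiv ℝ u ξ‖ ^ 2 from
    (fderiv ℝ u ξ).sum_sq_apply_single_eq_norm_sq, ← mul_pow]
  refine ⟨pow_le_pow_left₀ (norm_nonneg _) ?_ 2, abs_le.mpr ⟨?_, ?_⟩⟩
  · rw [le_inv_mul_iff₀ hr]
    linarith
  all_goals linarith [hle_one ξ hξ]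
end
end

section
/- (Lemma 7.1) Let n ≥ 1, δ > 0, R' > 0, and let f be a smooth strictly convex function on an open neighborhood of the closed ball B̄_δ(0) = {x ∈ ℝⁿ : |x| ≤ δ} satisfying −R' ≤ f ≤ R' on B̄_δ(0). Then there exists a point p* ∈ B̄_δ(0) such that det(∂²f/∂x_i∂x_j)(p*) < 2^{n+1} (4R'/δ²)^n; equivalently, 1/ρ(p*) < (4R'/δ²)^{n/(n+2)} · 2^{(n+1)/(n+2)}, where ρ = (det(∂²f/∂x_i∂x_j))^{−1/(n+2)}. -/
/-!
Strict convexity makes `∇f` strictly monotone, `⟪∇f y - ∇f x, y - x⟫ > 0`, hence injective on the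
ball. For `x` in the half ball, the mean value theorem along the direction of `∇f x` together with
monotonicity bounds `‖∇f x‖` by the oscillation `2R'` of `f` over a distance `δ/2`, so `∇f` maps
the half ball into the ball of radius `4R'/δ`. If `det D²f ≥ 2^{n+1}(4R'/δ²)^n` everywhere, the
change of variables inequality would make the image at least twice as large as that ball. The
bound on `1/ρ` is the `(n+2)`-th root of the bound on the determinant.
-/

noncomputable section

open Metric Set InnerProductSpace MeasureTheory Module Matrix
open scoped RealInnerProductSpace Gradient

section InnerProductSpace

variable {F : Type*} [NormedAddCommGroup F] [InnerProductSpace ℝ F]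
  {g : F → F} {g' : F → F →L[ℝ] F} {s : Set F}

theorem hasDerivAt_comp_add_smul {G : Type*} [NormedAddCommGroup G] [NormedSpace ℝ G]
    {φ : F → G} {φ' : F →L[ℝ] G} {x v : F} {t : ℝ} (hφ : HasFDerivAt φ φ' (x + t • v)) :
    HasDerivAt (fun s : ℝ => φ (x + s • v)) (φ' v) t :=
  hφ.comp_hasDerivAt t
    (((hasDerivAt_id t).smul_const v).const_add x |>.congr_deriv (one_smul ℝ v))

theorem inner_sub_sub_pos_of_hasFDerivAt (hs : Convex ℝ s) (hg : ∀ y ∈ s, HasFDerivAt g (g' y) y)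
    (hpos : ∀ y ∈ s, ∀ v ≠ 0, 0 < ⟪g' y v, v⟫) {x y : F} (hx : x ∈ s) (hy : y ∈ s)
    (hxy : x ≠ y) : 0 < ⟪g y - g x, y - x⟫ := by
  have hseg : ∀ t ∈ Icc (0 : ℝ) 1, x + t • (y - x) ∈ s := fun t ht =>
    hs.add_smul_sub_mem hx hy ht
  have hderiv : ∀ t ∈ Icc (0 : ℝ) 1, HasDerivAt (fun t : ℝ => ⟪g (x + t • (y - x)), y - x⟫)
      ⟪g' (x + t • (y - x)) (y - x), y - x⟫ t := fun t ht => by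
    simpa using
      (hasDerivAt_comp_add_smul (hg _ (hseg t ht))).inner ℝ (hasDerivAt_const t (y - x))
  obtain ⟨c, hc, hslope⟩ := exists_hasDerivAt_eq_slope _ _ zero_lt_one
    (fun t ht => (hderiv t ht).continuousAt.continuousWithinAt)
    (fun t ht => hderiv t (Ioo_subset_Icc_self ht))
  have := hpos _ (hseg c (Ioo_subset_Icc_self hc)) (y - x) (sub_ne_zero.2 hxy.symm)
  rw [hslope] at this
  simpa only [sub_zero, div_one, one_smul, zero_smul, add_zero, add_sub_cancel, sub_pos,
    ← inner_sub_left] using this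

theorem inner_sub_sub_nonneg_of_hasFDerivAt (hs : Convex ℝ s) (hg : ∀ y ∈ s, HasFDerivAt g (g' y) y)
    (hpos : ∀ y ∈ s, ∀ v ≠ 0, 0 < ⟪g' y v, v⟫) {x y : F} (hx : x ∈ s) (hy : y ∈ s) :
    0 ≤ ⟪g y - g x, y - x⟫ := by
  rcases eq_or_ne x y with rfl | hxy
  · simp
  · exact (inner_sub_sub_pos_of_hasFDerivAt hs hg hpos hx hy hxy).le

theorem injOn_of_hasFDerivAt_inner_pos (hs : Convex ℝ s) (hg : ∀ y ∈ s, HasFDerivAt g (g' y) y)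
    (hpos : ∀ y ∈ s, ∀ v ≠ 0, 0 < ⟪g' y v, v⟫) : InjOn g s := by
  intro x hx y hy hxy
  by_contra hne
  simpa [hxy] using inner_sub_sub_pos_of_hasFDerivAt hs hg hpos hx hy hne

theorem norm_gradient_le_of_monotone [CompleteSpace F] {f : F → ℝ} {x : F} {r R : ℝ}
    (hr : 0 < r)
    (hf : ∀ y ∈ closedBall x r, DifferentiableAt ℝ f y)
    (hmono : ∀ y ∈ closedBall x r, 0 ≤ ⟪∇ f y - ∇ f x, y - x⟫)
    (hbound : ∀ y ∈ closedBall x r, |f y| ≤ R) : ‖∇ f x‖ ≤ 2 * R / r := by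
  rcases eq_or_ne (∇ f x) 0 with h0 | h0
  · rw [h0, norm_zero]
    have := (abs_nonneg _).trans (hbound x (mem_closedBall_self hr.le))
    positivity
  set u := (r / ‖∇ f x‖) • ∇ f x
  have hu : ‖u‖ = r := by
    rw [norm_smul, Real.norm_of_nonneg (by positivity),
      div_mul_cancel₀ _ (norm_ne_zero_iff.2 h0)]
  have hseg : ∀ t ∈ Icc (0 : ℝ) 1, x + t • u ∈ closedBall x r := fun t ht => by
    rw [mem_closedBall, dist_self_add_left, norm_smul, hu, Real.norm_of_nonneg ht.1]
    nlinarith [ht.2]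
  have hderiv : ∀ t ∈ Icc (0 : ℝ) 1,
      HasDerivAt (fun t : ℝ => f (x + t • u)) ⟪∇ f (x + t • u), u⟫ t := fun t ht => by
    simpa [inner_gradient_left] using hasDerivAt_comp_add_smul (hf _ (hseg t ht)).hasFDerivAt
  obtain ⟨c, hc, hslope⟩ := exists_hasDerivAt_eq_slope _ _ zero_lt_one
    (fun t ht => (hderiv t ht).continuousAt.continuousWithinAt)
    (fun t ht => hderiv t (Ioo_subset_Icc_self ht))
  have hmono_c : ⟪∇ f x, u⟫ ≤ ⟪∇ f (x + c • u), u⟫ := by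
    have := hmono _ (hseg c (Ioo_subset_Icc_self hc))
    rw [add_sub_cancel_left, inner_smul_right, inner_sub_left] at this
    nlinarith [hc.1]
  have hx_u : ⟪∇ f x, u⟫ = r * ‖∇ f x‖ := by
    rw [inner_smul_right, real_inner_self_eq_norm_sq]
    field_simp
  have h1 := hbound _ (hseg 1 (right_mem_Icc.2 zero_le_one))
  have h0' := hbound x (mem_closedBall_self hr.le)
  rw [le_div_iff₀ hr]
  simp only [sub_zero, div_one, zero_smul, add_zero, one_smul] at hslope h1
  nlinarith [abs_le.1 h1, abs_le.1 h0']

theorem ContDiffOn.hasFDerivAt_gradient [CompleteSpace F] {f : F → ℝ} {U : Set F} {x : F}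
    (hf : ContDiffOn ℝ 2 f U) (hU : IsOpen U) (hx : x ∈ U) :
    HasFDerivAt (∇ f) (fderiv ℝ (∇ f) x) x := by
  have hdf : ContDiffOn ℝ 1 (fderiv ℝ f) U := hf.fderiv_of_isOpen hU (by norm_num)
  have : ContDiffOn ℝ 1 (∇ f) U := (toDual ℝ F).symm.contDiff.comp_contDiffOn hdf
  exact (this.differentiableOn one_ne_zero |>.differentiableAt (hU.mem_nhds hx)).hasFDerivAt

theorem mapsTo_gradient_ball_half [CompleteSpace F] {f : F → ℝ} {U : Set F} {c : F} {δ R : ℝ}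
    (hδ : 0 < δ) (hf : ContDiffOn ℝ 2 f U) (hU : IsOpen U) (hball : closedBall c δ ⊆ U)
    (hpos : ∀ x ∈ closedBall c δ, ∀ v ≠ 0, 0 < ⟪fderiv ℝ (∇ f) x v, v⟫)
    (hbound : ∀ x ∈ closedBall c δ, |f x| ≤ R) :
    MapsTo (∇ f) (ball c (δ / 2)) (closedBall 0 (4 * R / δ)) := by
  intro x hx
  have hxB : closedBall x (δ / 2) ⊆ closedBall c δ :=
    closedBall_subset_closedBall' (by rw [mem_ball] at hx; linarith)
  have hD : ∀ y ∈ closedBall c δ, HasFDerivAt (∇ f) (fderiv ℝ (∇ f) y) y := fun y hy =>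
    hf.hasFDerivAt_gradient hU (hball hy)
  rw [mem_closedBall_zero_iff, show 4 * R / δ = 2 * R / (δ / 2) by ring]
  exact norm_gradient_le_of_monotone (half_pos hδ)
    (fun y hy =>
      (hf.differentiableOn two_ne_zero).differentiableAt (hU.mem_nhds (hball (hxB hy))))
    (fun y hy => inner_sub_sub_nonneg_of_hasFDerivAt (convex_closedBall c δ) hD hpos
      (hxB (mem_closedBall_self (half_pos hδ).le)) (hxB hy))
    (fun y hy => hbound y (hxB hy))

end InnerProductSpace

section Volume

variable {E : Type*} [NormedAddCommGroup E] [NormedSpace ℝ E] [FiniteDimensional ℝ E]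
  [MeasurableSpace E] [BorelSpace E] (μ : Measure E) [μ.IsAddHaarMeasure]

theorem exists_abs_det_lt_of_injOn {s t : Set E} {g : E → E} {g' : E → E →L[ℝ] E}
    (hs : MeasurableSet s) (hg : ∀ x ∈ s, HasFDerivWithinAt g (g' x) s x) (hinj : InjOn g s)
    (hmaps : MapsTo g s t) {M : ℝ} (hvol : μ t < ENNReal.ofReal M * μ s) :
    ∃ x ∈ s, |(g' x).det| < M := by
  by_contra! hdet
  refine hvol.not_ge ?_
  calc ENNReal.ofReal M * μ s = ∫⁻ _ in s, ENNReal.ofReal M ∂μ := (setLIntegral_const _ _).symm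
    _ ≤ ∫⁻ x in s, ENNReal.ofReal |(g' x).det| ∂μ :=
      setLIntegral_mono' hs fun x hx => ENNReal.ofReal_le_ofReal (hdet x hx)
    _ ≤ μ (g '' s) := lintegral_abs_det_fderiv_le_addHaar_image μ hs hg hinj
    _ ≤ μ t := measure_mono hmaps.image_subset

theorem addHaar_closedBall_lt_ofReal_mul_addHaar_ball {a b M : ℝ} (ha : 0 ≤ a) (hb : 0 < b)
    (h : a ^ finrank ℝ E < M * b ^ finrank ℝ E) {x y : E} :
    μ (closedBall x a) < ENNReal.ofReal M * μ (ball y b) := by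
  rw [Measure.addHaar_closedBall μ x ha, Measure.addHaar_ball_of_pos μ y hb, ← mul_assoc,
    ← ENNReal.ofReal_mul' (by positivity)]
  exact ENNReal.mul_lt_mul_left (measure_ball_pos μ 0 one_pos).ne' measure_ball_lt_top.ne
    ((ENNReal.ofReal_lt_ofReal_iff_of_nonneg (by positivity)).2 h)

end Volume

theorem one_div_rpow_neg_lt_of_lt {d A : ℝ} {k : ℕ} (hd : 0 < d) (hA : 0 < A)
    (h : d < 2 ^ (k + 1) * A ^ k) :
    1 / d ^ (-(1 : ℝ) / ((k : ℝ) + 2)) <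
      A ^ ((k : ℝ) / ((k : ℝ) + 2)) * 2 ^ (((k : ℝ) + 1) / ((k : ℝ) + 2)) := by
  have hrhs : A ^ ((k : ℝ) / ((k : ℝ) + 2)) * 2 ^ (((k : ℝ) + 1) / ((k : ℝ) + 2))
      = (2 ^ (k + 1) * A ^ k) ^ (1 / ((k : ℝ) + 2)) := by
    rw [Real.mul_rpow (by positivity) (by positivity), ← Real.rpow_natCast A,
      ← Real.rpow_natCast (2 : ℝ), ← Real.rpow_mul hA.le, ← Real.rpow_mul zero_le_two]
    push_cast
    rw [mul_one_div, mul_one_div, mul_comm]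
  rw [neg_div, Real.rpow_neg hd.le, one_div (_ ^ _)⁻¹, inv_inv, hrhs]
  exact Real.rpow_lt_rpow hd.le h (by positivity)

section Euclidean

variable {n : ℕ} {f : EuclideanSpace ℝ (Fin n) → ℝ} {x : EuclideanSpace ℝ (Fin n)}

theorem gradient_apply_eq_pd (i : Fin n) : ∇ f x i = pd i f x := by
  simpa [pd, inner_gradient_left] using
    (EuclideanSpace.inner_single_right i (1 : ℝ) (∇ f x)).symm

-- The transpose only records that column `j` of `D(∇f)` is `∂ⱼ∇f`; no symmetry of `hess` is used.
theorem fderiv_gradient_eq_toEuclideanLin (hx : DifferentiableAt ℝ (∇ f) x) :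
    (fderiv ℝ (∇ f) x : EuclideanSpace ℝ (Fin n) →ₗ[ℝ] EuclideanSpace ℝ (Fin n)) =
      Matrix.toEuclideanLin (hess f x)ᵀ := by
  refine (EuclideanSpace.basisFun (Fin n) ℝ).toBasis.ext fun j => ?_
  ext i
  have hproj : (EuclideanSpace.proj i : EuclideanSpace ℝ (Fin n) →L[ℝ] ℝ) ∘ ∇ f = pd i f :=
    funext fun y => gradient_apply_eq_pd i
  have := congrArg (fun φ => φ (EuclideanSpace.single j 1))
    ((EuclideanSpace.proj i).hasFDerivAt.comp x hx.hasFDerivAt).fderiv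
  simp only [hproj] at this
  simp [hess, pd, this, Matrix.toLpLin_apply]

theorem det_fderiv_gradient (hx : DifferentiableAt ℝ (∇ f) x) :
    (fderiv ℝ (∇ f) x).det = (hess f x).det := by
  rw [ContinuousLinearMap.det, fderiv_gradient_eq_toEuclideanLin hx,
    Matrix.toEuclideanLin_eq_toLin_orthonormal, LinearMap.det_toLin, Matrix.det_transpose]

theorem inner_fderiv_gradient_pos (hx : DifferentiableAt ℝ (∇ f) x) (hpos : (hess f x).PosDef)
    {v : EuclideanSpace ℝ (Fin n)} (hv : v ≠ 0) : 0 < ⟪fderiv ℝ (∇ f) x v, v⟫ := by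
  have := hpos.dotProduct_mulVec_pos (x := WithLp.ofLp v) (by simpa using hv)
  rw [star_trivial] at this
  rw [← ContinuousLinearMap.coe_coe, fderiv_gradient_eq_toEuclideanLin hx]
  simp only [EuclideanSpace.inner_eq_star_dotProduct, Matrix.toLpLin_apply, star_trivial]
  rwa [mulVec_transpose, dotProduct_comm, ← dotProduct_mulVec]

theorem volume_closedBall_lt_ofReal_mul_volume_ball {δ R : ℝ} (hδ : 0 < δ) (hR : 0 < R) :
    volume (closedBall (0 : EuclideanSpace ℝ (Fin n)) (4 * R / δ)) <
      ENNReal.ofReal (2 ^ (n + 1) * (4 * R / δ ^ 2) ^ n) *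
        volume (ball (0 : EuclideanSpace ℝ (Fin n)) (δ / 2)) := by
  refine addHaar_closedBall_lt_ofReal_mul_addHaar_ball volume (by positivity) (half_pos hδ) ?_
  have : 2 ^ (n + 1) * (4 * R / δ ^ 2) ^ n * (δ / 2) ^ n = 2 * (4 * R / δ) ^ n := by
    rw [pow_succ, mul_comm _ 2, mul_assoc, mul_assoc, ← mul_pow, ← mul_pow]
    congr 2
    field_simp
  rw [finrank_euclideanSpace_fin, this]
  linarith [pow_pos (by positivity : 0 < 4 * R / δ) n]

end Euclidean

theorem lemma_7_1_general (n : ℕ) (δ R' : ℝ) (hδ : 0 < δ) (hR : 0 < R')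
    (U : Set (EuclideanSpace ℝ (Fin n))) (hUo : IsOpen U)
    (hball : Metric.closedBall (0 : EuclideanSpace ℝ (Fin n)) δ ⊆ U)
    (f : EuclideanSpace ℝ (Fin n) → ℝ) (hf : ContDiffOn ℝ (⊤ : ℕ∞) f U)
    (hconv : ∀ x ∈ U, (hess f x).PosDef)
    (hbound : ∀ x ∈ Metric.closedBall (0 : EuclideanSpace ℝ (Fin n)) δ,
      -R' ≤ f x ∧ f x ≤ R') :
    ∃ p ∈ Metric.closedBall (0 : EuclideanSpace ℝ (Fin n)) δ,
      (hess f p).det < 2 ^ (n + 1) * (4 * R' / δ ^ 2) ^ n ∧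
        1 / ((hess f p).det ^ (-(1 : ℝ) / ((n : ℝ) + 2))) <
          (4 * R' / δ ^ 2) ^ ((n : ℝ) / ((n : ℝ) + 2)) *
            2 ^ (((n : ℝ) + 1) / ((n : ℝ) + 2)) := by
  have hf2 : ContDiffOn ℝ 2 f U := hf.of_le (WithTop.coe_le_coe.2 le_top)
  have hD : ∀ x ∈ closedBall 0 δ, HasFDerivAt (∇ f) (fderiv ℝ (∇ f) x) x := fun x hx =>
    hf2.hasFDerivAt_gradient hUo (hball hx)
  have hpos : ∀ x ∈ closedBall 0 δ, ∀ v ≠ 0, 0 < ⟪fderiv ℝ (∇ f) x v, v⟫ := fun x hx _ hv =>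
    inner_fderiv_gradient_pos (hD x hx).differentiableAt (hconv x (hball hx)) hv
  have hsub : ball (0 : EuclideanSpace ℝ (Fin n)) (δ / 2) ⊆ closedBall 0 δ :=
    ball_subset_closedBall.trans (closedBall_subset_closedBall (by linarith))
  obtain ⟨p, hp, hdet⟩ := exists_abs_det_lt_of_injOn volume measurableSet_ball
    (fun x hx => (hD x (hsub hx)).hasFDerivWithinAt)
    ((injOn_of_hasFDerivAt_inner_pos (convex_closedBall 0 δ) hD hpos).mono hsub)
    (mapsTo_gradient_ball_half hδ hf2 hUo hball hpos fun x hx => abs_le.2 (hbound x hx))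
    (volume_closedBall_lt_ofReal_mul_volume_ball hδ hR)
  have hdet_pos := (hconv p (hball (hsub hp))).det_pos
  rw [det_fderiv_gradient (hD p (hsub hp)).differentiableAt, abs_of_pos hdet_pos] at hdet
  exact ⟨p, hsub hp, hdet, one_div_rpow_neg_lt_of_lt hdet_pos (by positivity) hdet⟩

/-- Lemma 7.1: a smooth strictly convex function with `−R' ≤ f ≤ R'` on the
closed Euclidean ball of radius `δ` has a point `p*` in that ball where
`det D²f(p*) < 2^{n+1}(4R'/δ²)^n`, i.e. `1/ρ(p*) < (4R'/δ²)^{n/(n+2)} 2^{(n+1)/(n+2)}`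
for `ρ = (det D²f)^{−1/(n+2)}`. -/
theorem lemma_7_1 (n : ℕ) (hn : 1 ≤ n) (δ R' : ℝ) (hδ : 0 < δ) (hR : 0 < R')
    (U : Set (EuclideanSpace ℝ (Fin n))) (hUo : IsOpen U)
    (hball : Metric.closedBall (0 : EuclideanSpace ℝ (Fin n)) δ ⊆ U)
    (f : EuclideanSpace ℝ (Fin n) → ℝ) (hf : ContDiffOn ℝ (⊤ : ℕ∞) f U)
    (hconv : ∀ x ∈ U, (hess f x).PosDef)
    (hbound : ∀ x ∈ Metric.closedBall (0 : EuclideanSpace ℝ (Fin n)) δ,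
      -R' ≤ f x ∧ f x ≤ R') :
    ∃ p ∈ Metric.closedBall (0 : EuclideanSpace ℝ (Fin n)) δ,
      (hess f p).det < 2 ^ (n + 1) * (4 * R' / δ ^ 2) ^ n ∧
        1 / ((hess f p).det ^ (-(1 : ℝ) / ((n : ℝ) + 2))) <
          (4 * R' / δ ^ 2) ^ ((n : ℝ) / ((n : ℝ) + 2)) *
            2 ^ (((n : ℝ) + 1) / ((n : ℝ) + 2)) :=
  lemma_7_1_general n δ R' hδ hR U hUo hball f hf hconv hbound
end
end
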